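/- arXiv:1902.01610 — 3 statements merged into one kernel-verified Lean document; each statement's English description precedes it below -/
import Mathlib

section
/- Let α be a generator of the multiplicative group of F_{p^n} and let T_n = ⟨α⟩ be embedded in GL_n(F_p) via a choice of F_p-basis of F_{p^n}. Then for any k, the centralizer of α^k in GL_n(F_p) has order |GL_{m_k}(F_{p^{d_k}})|, where d_k is the cardinality of the Frobenius orbit {α^k, α^{pk}, ..., α^{p^{n-1}k}} and m_k = n/d_k. -/
/-!
Multiplication by `β = α ^ k` on `L = 𝔽_{p^n}` commutes exactly with the `𝔽_p(β)`-linear maps,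
so the centralizer is `GL_{𝔽_p(β)}(L) ≅ GL_m(𝔽_{p^d})` with `d = [𝔽_p(β) : 𝔽_p]` and
`m = [L : 𝔽_p(β)]`. The Frobenius orbit of `β` has exactly `d` elements: `Gal(𝔽_p(β)/𝔽_p)` is
cyclic of order `d`, generated by Frobenius, and acts freely on the generator `β`.
-/

open scoped MatrixGroups Classical

open IntermediateField

theorem Subgroup.map_equiv_centralizer_singleton {G H : Type*} [Group G] [Group H] (e : G ≃* H)
    (g : G) : (centralizer {g}).map e = centralizer {e g} := by
  ext h
  rw [map_equiv_eq_comap_symm, mem_comap, mem_centralizer_singleton_iff,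
    mem_centralizer_singleton_iff, ← e.injective.eq_iff]
  simp

theorem Subgroup.natCard_centralizer_singleton_equiv {G H : Type*} [Group G] [Group H] (e : G ≃* H)
    (g : G) : Nat.card (centralizer {e g}) = Nat.card (centralizer {g}) := by
  rw [← map_equiv_centralizer_singleton e]
  exact Nat.card_congr (e.subgroupMap _).symm.toEquiv

theorem Subgroup.natCard_centralizer_singleton_units {M : Type*} [Monoid M] (u : Mˣ) :
    Nat.card (centralizer {u}) = Nat.card (Submonoid.centralizer ({(u : M)} : Set M))ˣ := by
  rw [centralizer_eq_comap_stabilizer]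
  exact Nat.card_congr (unitsCentralizerEquiv M u).symm.toEquiv

section CentralizerMulLeft

variable {K L : Type*} [Field K] [Field L] [Algebra K L]

theorem LinearMap.map_mul_of_commute_mulLeft {β : L} {f : Module.End K L}
    (hf : Commute f (mulLeft K β)) {c : L} (hc : c ∈ K⟮β⟯) (x : L) :
    f (c * x) = c * f x := by
  induction hc using adjoin_induction generalizing x with
  | mem y hy =>
    obtain rfl := Set.mem_singleton_iff.mp hy
    exact congr($hf.eq x)
  | algebraMap r => simp [← Algebra.smul_def]
  | add y z _ _ ihy ihz => rw [add_mul, map_add, ihy, ihz, add_mul]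
  | mul y z _ _ ihy ihz => rw [mul_assoc, ihy, ihz, mul_assoc]
  | inv y _ ihy =>
    rcases eq_or_ne y 0 with rfl | hy
    · simp
    · rw [eq_inv_mul_iff_mul_eq₀ hy, ← ihy, mul_inv_cancel_left₀ hy]

variable (K) in
noncomputable def LinearMap.centralizerMulLeftEquiv (β : L) :
    Submonoid.centralizer {mulLeft K β} ≃* Module.End K⟮β⟯ L where
  toFun f :=
    { toFun := f.1
      map_add' := f.1.map_add
      map_smul' c x := map_mul_of_commute_mulLeft (f.2 _ rfl).symm c.2 x }
  invFun f := ⟨f.restrictScalars K, by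
    rintro _ rfl
    exact LinearMap.ext fun x => (f.map_smul (AdjoinSimple.gen K β) x).symm⟩
  left_inv _ := rfl
  right_inv _ := rfl
  map_mul' _ _ := rfl

theorem LinearMap.natCard_centralizer_mulLeft (β : L) {u : (Module.End K L)ˣ}
    (hu : (u : Module.End K L) = mulLeft K β) :
    Nat.card (Subgroup.centralizer {u}) = Nat.card (Module.End K⟮β⟯ L)ˣ := by
  rw [Subgroup.natCard_centralizer_singleton_units, hu]
  exact Nat.card_congr (Units.mapEquiv (centralizerMulLeftEquiv K β)).toEquiv

end CentralizerMulLeft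

theorem AlgEquiv.injective_apply_adjoinSimpleGen {K L : Type*} [Field K] [Field L] [Algebra K L]
    (β : L) : Function.Injective fun σ : Gal(K⟮β⟯/K) => σ (AdjoinSimple.gen K β) := by
  intro σ τ h
  have : (val K⟮β⟯).comp σ.toAlgHom = (val K⟮β⟯).comp τ.toAlgHom :=
    adjoin_algHom_ext K fun x hx => by
      obtain rfl := Set.mem_singleton_iff.mp hx
      exact congrArg Subtype.val h
  exact coe_toAlgHom_injective <| AlgHom.ext fun x => Subtype.val_injective <|
    DFunLike.congr_fun this x

theorem FiniteField.card_image_pow_card_pow_eq_finrank_adjoin {K L : Type*} [Field K] [Fintype K]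
    [Field L] [Algebra K L] {β : L} (hβ : IsIntegral K β) {n : ℕ}
    (hn : Module.finrank K K⟮β⟯ ≤ n) :
    ((Finset.range n).image fun i => β ^ Fintype.card K ^ i).card = Module.finrank K K⟮β⟯ := by
  have : FiniteDimensional K K⟮β⟯ := adjoin.finiteDimensional hβ
  have : Finite K⟮β⟯ := Module.finite_of_finite K
  set φ := frobeniusAlgEquivOfAlgebraic K K⟮β⟯
  set ev := fun σ : Gal(K⟮β⟯/K) => (σ (AdjoinSimple.gen K β) : L)
  have hev : Function.Injective ev :=
    Subtype.val_injective.comp (AlgEquiv.injective_apply_adjoinSimpleGen β)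
  have hpow (i : ℕ) : ev (φ ^ i) = β ^ Fintype.card K ^ i := by
    simp [ev, φ, AlgEquiv.coe_pow, coe_frobeniusAlgEquivOfAlgebraic_iterate]
  have hall : (Finset.range n).image (φ ^ ·) = Finset.univ := by
    refine Finset.eq_univ_of_forall fun σ => ?_
    obtain ⟨i, rfl⟩ := (bijective_frobeniusAlgEquivOfAlgebraic_pow K K⟮β⟯).2 σ
    exact Finset.mem_image_of_mem _ (Finset.mem_range.mpr (i.2.trans_le hn))
  calc ((Finset.range n).image fun i => β ^ Fintype.card K ^ i).card
      = (((Finset.range n).image (φ ^ ·)).image ev).card := by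
        simp only [Finset.image_image, Function.comp_def, hpow]
    _ = Fintype.card Gal(K⟮β⟯/K) := by
        rw [hall, Finset.card_image_of_injective _ hev, Finset.card_univ]
    _ = Module.finrank K K⟮β⟯ :=
        (Fintype.card_of_bijective (bijective_frobeniusAlgEquivOfAlgebraic_pow K K⟮β⟯)).symm.trans
          (Fintype.card_fin _)

theorem Matrix.GeneralLinearGroup.coe_toLin' {n R V : Type*} [DecidableEq n] [Fintype n]
    [CommRing R] [AddCommGroup V] [Module R V] (b : Module.Basis n R V) (g : GL n R) :
    (toLin' b g : Module.End R V) = Matrix.toLin b b g := by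
  ext v
  simpa [Matrix.toLin_apply, Fintype.linearCombination_apply] using toLin'_apply b g v

theorem Matrix.natCard_GL_congr {ι F F' : Type*} [DecidableEq ι] [Fintype ι] [Field F] [Finite F]
    [Field F'] [Finite F'] (h : Nat.card F = Nat.card F') :
    Nat.card (GL ι F) = Nat.card (GL ι F') :=
  have := Fintype.ofFinite F
  have := Fintype.ofFinite F'
  Nat.card_congr (Units.mapEquiv
    (FiniteField.ringEquivOfCardEq (by simpa using h)).mapMatrix.toMulEquiv).toEquiv

theorem card_centralizer_eq_general (p n : ℕ) [Fact p.Prime]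
    (α : (GaloisField p n)ˣ)
    (b : Module.Basis (Fin n) (ZMod p) (GaloisField p n))
    (k : ℕ) (g : GL (Fin n) (ZMod p))
    (hg : (g : Matrix (Fin n) (Fin n) (ZMod p)) =
      LinearMap.toMatrix b b (LinearMap.mulLeft (ZMod p) ((α : GaloisField p n) ^ k)))
    (d m : ℕ)
    (hd : d = ((Finset.range n).image (fun i => (α : GaloisField p n) ^ (k * p ^ i))).card)
    (hm : n = d * m) :
    Nat.card (Subgroup.centralizer {g} : Subgroup (GL (Fin n) (ZMod p))) =
      Nat.card (GL (Fin m) (GaloisField p d)) := by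
  set β := (α : GaloisField p n) ^ k
  have hn : Module.finrank (ZMod p) (GaloisField p n) = n := by
    simpa using Module.finrank_eq_card_basis b
  have hdβ : d = Module.finrank (ZMod p) (ZMod p)⟮β⟯ := by
    have := FiniteField.card_image_pow_card_pow_eq_finrank_adjoin (.of_finite (ZMod p) β)
      (hn ▸ (finrank_le_of_le_right le_top).trans_eq finrank_top')
    simpa only [hd, pow_mul, ZMod.card] using this
  have hmβ : Module.finrank (ZMod p)⟮β⟯ (GaloisField p n) = m := by
    have := Module.finrank_mul_finrank (ZMod p) (ZMod p)⟮β⟯ (GaloisField p n)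
    rw [hn, ← hdβ] at this
    exact Nat.eq_of_mul_eq_mul_left (hdβ ▸ Module.finrank_pos) (this.trans hm)
  have hcard : Nat.card (ZMod p)⟮β⟯ = Nat.card (GaloisField p d) := by
    rw [Module.natCard_eq_pow_finrank (K := ZMod p), Nat.card_zmod, ← hdβ,
      GaloisField.card p d (hdβ ▸ Module.finrank_pos.ne')]
  have hgβ : (Matrix.GeneralLinearGroup.toLin' b g : Module.End (ZMod p) (GaloisField p n)) =
      LinearMap.mulLeft (ZMod p) β := by
    rw [Matrix.GeneralLinearGroup.coe_toLin', hg, Matrix.toLin_toMatrix]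
  rw [← Subgroup.natCard_centralizer_singleton_equiv (Matrix.GeneralLinearGroup.toLin' b),
    LinearMap.natCard_centralizer_mulLeft β hgβ,
    ← Nat.card_congr (Matrix.GeneralLinearGroup.toLin' (Module.finBasisOfFinrankEq _ _ hmβ)).toEquiv]
  exact Matrix.natCard_GL_congr hcard

/-- Let `α` be a generator of `F_{p^n}ˣ` and embed `T_n = ⟨α⟩` into `GL n (F_p)` via a
choice of `F_p`-basis of `F_{p^n}` (so that `α ^ k` acts by multiplication).  Then the
centralizer of (the image of) `α ^ k` has order `|GL m (F_{p^d})|`, where `d` is the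
cardinality of the Frobenius orbit of `α ^ k` and `m = n / d`. -/
theorem card_centralizer_eq (p n : ℕ) [Fact p.Prime] (hn : 0 < n)
    (α : (GaloisField p n)ˣ) (hα : ∀ x : (GaloisField p n)ˣ, x ∈ Subgroup.zpowers α)
    (b : Module.Basis (Fin n) (ZMod p) (GaloisField p n))
    (k : ℕ) (g : GL (Fin n) (ZMod p))
    (hg : (g : Matrix (Fin n) (Fin n) (ZMod p)) =
      LinearMap.toMatrix b b (LinearMap.mulLeft (ZMod p) ((α : GaloisField p n) ^ k)))
    (d m : ℕ)
    (hd : d = ((Finset.range n).image (fun i => (α : GaloisField p n) ^ (k * p ^ i))).card)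
    (hm : n = d * m) :
    Nat.card (Subgroup.centralizer {g} : Subgroup (GL (Fin n) (ZMod p))) =
      Nat.card (GL (Fin m) (GaloisField p d)) :=
  card_centralizer_eq_general p n α b k g hg d m hd hm
end

section
/- With notation as above, the value of the induced class function Ind_{T_n}^{GL_n(F_p)}(1_{α^k}) at the element α^k equals |GL_{m_k}(F_{p^{d_k}})| / (p^n - 1), where 1_{α^k} is the indicator class function of α^k on T_n, d_k is the size of the Frobenius orbit of α^k and m_k = n/d_k. -/
open scoped MatrixGroups Classical

/-!
As `|T_n| = p^n - 1` and the indicator of `α^k` forces `h α^k h⁻¹ = α^k`, the induced value is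
`|C(g)| / (p^n - 1)`, where `g` is multiplication by `β = α ^ k` on `F_{p^n}` viewed as an
`F_p`-linear map. A linear map commuting with multiplication by `β` commutes with
multiplication by every element of `E = F_p(β)`, so the centralizer is `GL_E(F_{p^n})`, which is
`GL_m(F_{p^d})` once `d = [E : F_p]`. That last identity holds because the Frobenius orbit of `β`
is its Galois orbit, i.e. the set of roots of its (separable) minimal polynomial.
-/

open IntermediateField Module

theorem Normal.orbit_eq_rootSet_minpoly {K L : Type*} [Field K] [Field L] [Algebra K L]
    [Normal K L] (x : L) : MulAction.orbit Gal(L/K) x = (minpoly K x).rootSet L := by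
  ext y
  rw [← isConjRoot_iff_mem_minpoly_rootSet (Algebra.IsIntegral.isIntegral x), IsConjRoot.comm,
    isConjRoot_iff_orbitRel, MulAction.orbitRel_apply]

theorem IsGalois.card_orbit_eq_finrank_adjoin {K L : Type*} [Field K] [Field L] [Algebra K L]
    [IsGalois K L] (x : L) : Nat.card (MulAction.orbit Gal(L/K) x) = finrank K K⟮x⟯ := by
  rw [Normal.orbit_eq_rootSet_minpoly, adjoin.finrank (Algebra.IsIntegral.isIntegral x),
    Nat.card_eq_fintype_card, Polynomial.card_rootSet_eq_natDegree
      (Algebra.IsSeparable.isSeparable K x) (Normal.splits inferInstance x)]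

namespace FiniteField

variable {K L : Type*} [Field K] [Field L] [Fintype K] [Finite L] [Algebra K L] [DecidableEq L]

theorem coe_image_range_pow_card_pow_eq_orbit (x : L) :
    ((Finset.range (finrank K L)).image (fun i => x ^ Fintype.card K ^ i) : Set L) =
      MulAction.orbit Gal(L/K) x := by
  ext y
  simp only [Finset.coe_image, Finset.coe_range, MulAction.mem_orbit_iff, AlgEquiv.smul_def]
  constructor
  · rintro ⟨i, -, rfl⟩
    exact ⟨frobeniusAlgEquivOfAlgebraic K L ^ i, by
      rw [AlgEquiv.coe_pow, coe_frobeniusAlgEquivOfAlgebraic_iterate]⟩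
  · rintro ⟨σ, rfl⟩
    obtain ⟨i, rfl⟩ := (bijective_frobeniusAlgEquivOfAlgebraic_pow K L).2 σ
    exact ⟨i, i.2, by rw [AlgEquiv.coe_pow, coe_frobeniusAlgEquivOfAlgebraic_iterate]⟩

theorem card_image_range_pow_card_pow (x : L) :
    ((Finset.range (finrank K L)).image (fun i => x ^ Fintype.card K ^ i)).card =
      finrank K K⟮x⟯ := by
  rw [← Nat.card_eq_finsetCard, ← Finset.coe_sort_coe, coe_image_range_pow_card_pow_eq_orbit,
    IsGalois.card_orbit_eq_finrank_adjoin]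

end FiniteField

namespace Module.End

variable {K L : Type*} [Field K] [Field L] [Algebra K L]

def scalarSubfield (f : Module.End K L) : IntermediateField K L where
  carrier := {c | ∀ x, f (c * x) = c * f x}
  mul_mem' {a b} (ha : ∀ x, _) (hb : ∀ x, _) x := by rw [mul_assoc, ha, hb, mul_assoc]
  add_mem' {a b} (ha : ∀ x, _) (hb : ∀ x, _) x := by rw [add_mul, map_add, ha, hb, add_mul]
  algebraMap_mem' r x := by rw [← Algebra.smul_def, map_smul, Algebra.smul_def]
  inv_mem' a ha x := by
    rcases eq_or_ne a 0 with rfl | ha0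
    · simp
    · rw [eq_inv_mul_iff_mul_eq₀ ha0, ← ha, mul_inv_cancel_left₀ ha0]

theorem adjoin_simple_le_scalarSubfield {f : Module.End K L} {β : L}
    (h : Commute f (LinearMap.mulLeft K β)) : K⟮β⟯ ≤ f.scalarSubfield :=
  adjoin_simple_le_iff.2 fun x => LinearMap.congr_fun h.eq x

def extendScalarsOfLE (f : Module.End K L) {E : IntermediateField K L}
    (hE : E ≤ f.scalarSubfield) : L →ₗ[E] L where
  toFun := f
  map_add' := f.map_add
  map_smul' c x := hE c.2 x

def centralizerMulLeftEquiv (β : L) (u : (Module.End K L)ˣ)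
    (hu : (u : Module.End K L) = LinearMap.mulLeft K β) :
    Subgroup.centralizer {u} ≃* (L →ₗ[K⟮β⟯] L)ˣ :=
  have le_scalarSubfield (v : Subgroup.centralizer {u}) :
      K⟮β⟯ ≤ scalarSubfield ((v : (Module.End K L)ˣ) : Module.End K L) :=
    adjoin_simple_le_scalarSubfield <|
      hu ▸ Commute.units_val (Subgroup.mem_centralizer_singleton_iff.1 v.2)
  { toFun v :=
      { val := extendScalarsOfLE _ (le_scalarSubfield v)
        inv := extendScalarsOfLE _ (le_scalarSubfield v⁻¹)
        val_inv := LinearMap.ext fun x => LinearMap.congr_fun v.1.mul_inv x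
        inv_val := LinearMap.ext fun x => LinearMap.congr_fun v.1.inv_mul x }
    invFun w :=
      ⟨{ val := (w : L →ₗ[K⟮β⟯] L).restrictScalars K
         inv := (↑w⁻¹ : L →ₗ[K⟮β⟯] L).restrictScalars K
         val_inv := LinearMap.ext fun x => LinearMap.congr_fun w.mul_inv x
         inv_val := LinearMap.ext fun x => LinearMap.congr_fun w.inv_mul x },
        Subgroup.mem_centralizer_singleton_iff.2 <| Units.ext <| LinearMap.ext fun x => by
          simp only [Units.val_mul, Module.End.mul_apply, hu, LinearMap.mulLeft_apply]
          exact (w : L →ₗ[K⟮β⟯] L).map_smul ⟨β, mem_adjoin_simple_self K β⟩ x⟩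
    left_inv _ := rfl
    right_inv _ := rfl
    map_mul' _ _ := rfl }

theorem card_units_eq_card_GL (F V : Type*) [Field F] [AddCommGroup V] [Module F V]
    [FiniteDimensional F V] : Nat.card (Module.End F V)ˣ = Nat.card (GL (Fin (finrank F V)) F) :=
  Nat.card_congr (Units.mapEquiv (LinearMap.toMatrixAlgEquiv (finBasis F V)).toMulEquiv).toEquiv

end Module.End

theorem Subgroup.card_centralizer_singleton_congr {G G' : Type*} [Group G] [Group G']
    (e : G ≃* G') (g : G) :
    Nat.card (Subgroup.centralizer {g}) = Nat.card (Subgroup.centralizer {e g}) :=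
  Nat.card_congr <| e.toEquiv.subtypeEquiv fun h => by
    simp [Subgroup.mem_centralizer_singleton_iff, ← map_mul]

theorem Subgroup.sum_ite_conj_eq_card_centralizer {G R : Type*} [Group G] [Fintype G]
    [DecidableEq G] [AddCommMonoidWithOne R] (g : G) :
    ∑ h : G, (if h * g * h⁻¹ = g then (1 : R) else 0) = Nat.card (Subgroup.centralizer {g}) := by
  simp only [Finset.sum_boole, mul_inv_eq_iff_eq_mul, Nat.card_eq_fintype_card,
    Fintype.card_subtype, Subgroup.mem_centralizer_singleton_iff]

theorem Matrix.card_GL_congr {F F' : Type*} [Field F] [Field F'] [Finite F] [Finite F']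
    (h : Nat.card F = Nat.card F') (m : ℕ) :
    Nat.card (GL (Fin m) F) = Nat.card (GL (Fin m) F') := by
  have := Fintype.ofFinite F
  have := Fintype.ofFinite F'
  simp only [Matrix.card_GL_field, ← Nat.card_eq_fintype_card, h]

theorem induced_indicator_value_general (p n : ℕ) [Fact p.Prime]
    (α : (GaloisField p n)ˣ)
    (b : Module.Basis (Fin n) (ZMod p) (GaloisField p n))
    (k : ℕ) (g : GL (Fin n) (ZMod p))
    (hg : (g : Matrix (Fin n) (Fin n) (ZMod p)) =
      LinearMap.toMatrix b b (LinearMap.mulLeft (ZMod p) ((α : GaloisField p n) ^ k)))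
    (d m : ℕ)
    (hd : d = ((Finset.range n).image (fun i => (α : GaloisField p n) ^ (k * p ^ i))).card)
    (hm : n = d * m) :
    (1 / ((p : ℂ) ^ n - 1)) *
        ∑ h : GL (Fin n) (ZMod p), (if h * g * h⁻¹ = g then (1 : ℂ) else 0) =
      (Nat.card (GL (Fin m) (GaloisField p d)) : ℂ) / ((p : ℂ) ^ n - 1) := by
  set β := (α : GaloisField p n) ^ k
  have hn : finrank (ZMod p) (GaloisField p n) = n := by simp [finrank_eq_card_basis b]
  have hd : d = finrank (ZMod p) (ZMod p)⟮β⟯ := by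
    rw [hd, ← FiniteField.card_image_range_pow_card_pow, ZMod.card, hn]
    simp only [β, pow_mul]
  have hd0 : d ≠ 0 := hd ▸ finrank_pos.ne'
  have hm : finrank (ZMod p)⟮β⟯ (GaloisField p n) = m := by
    refine Nat.eq_of_mul_eq_mul_left (Nat.pos_of_ne_zero hd0) ?_
    rw [← hm, hd, finrank_mul_finrank, hn]
  have hcard : Nat.card (ZMod p)⟮β⟯ = Nat.card (GaloisField p d) := by
    rw [Module.natCard_eq_pow_finrank (K := ZMod p), Nat.card_zmod, GaloisField.card p d hd0, hd]
  let Φ := Units.mapEquiv (LinearMap.toMatrixAlgEquiv b).symm.toMulEquiv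
  have hu : (Φ g : Module.End (ZMod p) (GaloisField p n)) = LinearMap.mulLeft (ZMod p) β := by
    show (LinearMap.toMatrixAlgEquiv b).symm g = _
    rw [hg]
    exact (LinearMap.toMatrixAlgEquiv b).symm_apply_apply _
  rw [one_div_mul_eq_div, Subgroup.sum_ite_conj_eq_card_centralizer,
    Subgroup.card_centralizer_singleton_congr Φ g,
    Nat.card_congr (Module.End.centralizerMulLeftEquiv β _ hu).toEquiv,
    Module.End.card_units_eq_card_GL, hm, Matrix.card_GL_congr hcard]

/-- With `T_n = ⟨α⟩ ⊂ GL n (F_p)` (via an `F_p`-basis of `F_{p^n}`), the induced class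
function `Ind_{T_n}^{GL_n(F_p)}(1_{α^k})`, evaluated at (the image of) `α ^ k`, equals
`|GL_{m}(F_{p^{d}})| / (p^n - 1)`.  Here the value of the induced class function at
`α^k` is `(1/|T_n|) ∑_{h ∈ GL_n(F_p), h α^k h⁻¹ ∈ T_n} 1_{α^k}(h α^k h⁻¹)`, which
simplifies to the sum below, `d` is the size of the Frobenius orbit of `α^k` and
`m = n / d`. -/
theorem induced_indicator_value (p n : ℕ) [Fact p.Prime] (hn : 0 < n)
    (α : (GaloisField p n)ˣ) (hα : ∀ x : (GaloisField p n)ˣ, x ∈ Subgroup.zpowers α)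
    (b : Module.Basis (Fin n) (ZMod p) (GaloisField p n))
    (k : ℕ) (g : GL (Fin n) (ZMod p))
    (hg : (g : Matrix (Fin n) (Fin n) (ZMod p)) =
      LinearMap.toMatrix b b (LinearMap.mulLeft (ZMod p) ((α : GaloisField p n) ^ k)))
    (d m : ℕ)
    (hd : d = ((Finset.range n).image (fun i => (α : GaloisField p n) ^ (k * p ^ i))).card)
    (hm : n = d * m) :
    (1 / ((p : ℂ) ^ n - 1)) *
        ∑ h : GL (Fin n) (ZMod p), (if h * g * h⁻¹ = g then (1 : ℂ) else 0) =
      (Nat.card (GL (Fin m) (GaloisField p d)) : ℂ) / ((p : ℂ) ^ n - 1) :=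
  induced_indicator_value_general p n α b k g hg d m hd hm
end

section
/- For a finite group G acting linearly on a finite-dimensional complex vector space W via a representation ρ, the Poincaré series of the invariants of the symmetric algebra, Σ_d dim (Sym^d W^*)^G · t^d, equals (1/|G|) Σ_{g ∈ G} 1/det(1 - t·ρ(g)^{-1}) (Molien's formula). -/
/-!
Averaging over `G` is a projection onto the invariants, so `dim (Sym^d W^*)^G` is the mean over
`g` of the trace of `g` on homogeneous polynomials of degree `d`. Each `ρ(g)⁻¹` has finite order,
hence is diagonalizable over `ℂ`, and both that trace and `det (1 - t ρ(g)⁻¹)` are conjugation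
invariant. For a diagonal matrix with eigenvalues `λᵢ` the degree-`d` monomials are eigenvectors
with eigenvalues `λ^k`, so the generating function of the traces is `∏ᵢ 1 / (1 - λᵢ t)`.
-/

open MvPolynomial Module

lemma PowerSeries.mk_pow_mul_one_sub_C_mul_X {R : Type*} [CommRing R] (a : R) :
    PowerSeries.mk (a ^ ·) * (1 - PowerSeries.C a * PowerSeries.X) = 1 := by
  simpa [PowerSeries.rescale_mk, PowerSeries.rescale_X] using
    congrArg (PowerSeries.rescale a) (PowerSeries.mk_one_mul_one_sub_eq_one (S := R))

lemma Module.End.isSemisimple_of_pow_eq_one {K V : Type*} [Field K] [AddCommGroup V]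
    [Module K V] {f : Module.End K V} {N : ℕ} (hf : f ^ N = 1) (hN : (N : K) ≠ 0) :
    f.IsSemisimple :=
  isSemisimple_of_squarefree_aeval_eq_zero
    (Polynomial.X_pow_sub_one_separable_iff.mpr hN).squarefree (by simp [hf])

lemma Module.End.exists_basis_apply_eq_smul {K V : Type*} [Field K] [IsAlgClosed K]
    [AddCommGroup V] [Module K V] [FiniteDimensional K V] {f : Module.End K V}
    (hf : f.IsSemisimple) :
    ∃ (b : Basis (Fin (finrank K V)) K V) (μ : Fin (finrank K V) → K),
      ∀ i, f (b i) = μ i • b i := by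
  classical
  have hint : DirectSum.IsInternal fun μ : K => f.eigenspace μ :=
    DirectSum.isInternal_submodule_of_iSupIndep_of_iSup_eq_top f.eigenspaces_iSupIndep
      hf.iSup_eigenspace_eq_top
  let bμ := fun μ => finBasis K (f.eigenspace μ)
  let b := hint.collectedBasis bμ
  let e := b.indexEquiv (finBasis K V)
  refine ⟨b.reindex e, fun i => (e.symm i).1, fun i => ?_⟩
  simpa [b, Basis.reindex_apply, DirectSum.IsInternal.collectedBasis_coe] using
    (Module.End.mem_eigenspace_iff.mp (hint.collectedBasis_mem bμ (e.symm i)))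

namespace MvPolynomial

variable {n R : Type*} [Fintype n] [DecidableEq n] [CommSemiring R]

lemma homogeneousSubmodule_eq_restrictSupport_finsuppAntidiag (d : ℕ) :
    homogeneousSubmodule n R d =
      restrictSupport R ((Finset.univ.finsuppAntidiag d : Finset (n →₀ ℕ)) : Set (n →₀ ℕ)) := by
  rw [homogeneousSubmodule_eq_finsupp_supported]
  congr 1
  ext k
  simp [Finsupp.degree_eq_sum]

noncomputable def homogeneousMonomialBasis (n R : Type*) [Fintype n] [DecidableEq n]
    [CommSemiring R] (d : ℕ) : Basis (Finset.univ.finsuppAntidiag d : Finset (n →₀ ℕ)) R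
      (homogeneousSubmodule n R d) :=
  (basisRestrictSupport R _).map
    (LinearEquiv.ofEq _ _ (homogeneousSubmodule_eq_restrictSupport_finsuppAntidiag d).symm)

@[simp]
lemma coe_homogeneousMonomialBasis (d : ℕ)
    (k : (Finset.univ.finsuppAntidiag d : Finset (n →₀ ℕ))) :
    (homogeneousMonomialBasis n R d k : MvPolynomial n R) = monomial k 1 := by
  have hmem : monomial (k : n →₀ ℕ) (1 : R) ∈
      restrictSupport R ((Finset.univ.finsuppAntidiag d : Finset (n →₀ ℕ)) : Set (n →₀ ℕ)) := by
    simp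
  have := (basisRestrictSupport R _).apply_eq_iff (i := k) (x := ⟨_, hmem⟩) |>.mpr ?_
  · exact congrArg Subtype.val this
  ext k'
  change coeff (k' : n →₀ ℕ) (monomial (k : n →₀ ℕ) (1 : R)) = Finsupp.single k 1 k'
  rw [coeff_monomial, Finsupp.single_apply]
  exact if_congr Subtype.ext_iff.symm rfl rfl

instance (d : ℕ) : Module.Finite R (homogeneousSubmodule n R d) :=
  Module.Finite.of_basis (homogeneousMonomialBasis n R d)

end MvPolynomial

namespace Matrix

section LinearSubst

variable {n R : Type*} [Fintype n] [CommSemiring R]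

lemma toMvPolynomial_eq_sum_smul_X (A : Matrix n n R) (i : n) :
    A.toMvPolynomial i = ∑ j, A i j • X j := by
  simp only [toMvPolynomial, smul_monomial, smul_eq_mul, mul_one, X]

noncomputable def linearSubst (A : Matrix n n R) : MvPolynomial n R →ₐ[R] MvPolynomial n R :=
  bind₁ A.toMvPolynomial

lemma linearSubst_apply (A : Matrix n n R) (p : MvPolynomial n R) :
    linearSubst A p = aeval (fun i => ∑ j, A i j • X j) p := by
  simp only [linearSubst, ← toMvPolynomial_eq_sum_smul_X]
  rfl

lemma linearSubst_mul (A B : Matrix n n R) :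
    linearSubst (A * B) = (linearSubst B).comp (linearSubst A) := by
  rw [linearSubst, linearSubst, linearSubst, bind₁_comp_bind₁]
  exact congrArg bind₁ (funext (toMvPolynomial_mul A B))

@[simp]
lemma linearSubst_one [DecidableEq n] : linearSubst (1 : Matrix n n R) = AlgHom.id R _ := by
  rw [linearSubst, toMvPolynomial_one, bind₁_X_left]

lemma linearSubst_mem_homogeneousSubmodule (A : Matrix n n R) {d : ℕ} {p : MvPolynomial n R}
    (hp : p ∈ homogeneousSubmodule n R d) : linearSubst A p ∈ homogeneousSubmodule n R d := by
  simpa [linearSubst] using hp.aeval A.toMvPolynomial (toMvPolynomial_isHomogeneous A)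

lemma linearSubst_diagonal_monomial [DecidableEq n] (μ : n → R) (k : n →₀ ℕ) (r : R) :
    linearSubst (diagonal μ) (monomial k r) = monomial k (r * k.prod fun i e => μ i ^ e) := by
  have hdiag : (diagonal μ).toMvPolynomial = fun i => C (μ i) * X i := by
    ext1 i
    simp [toMvPolynomial_eq_sum_smul_X, diagonal_apply, ite_smul, smul_eq_C_mul]
  rw [linearSubst, bind₁_monomial, hdiag]
  simp only [mul_pow, Finset.prod_mul_distrib, prod_X_pow_eq_monomial, ← map_pow, ← map_prod,
    C_mul_monomial, mul_one, Finsupp.prod]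

noncomputable def linearSubstHomogeneous (A : Matrix n n R) (d : ℕ) :
    Module.End R (homogeneousSubmodule n R d) :=
  (linearSubst A).toLinearMap.restrict fun _ => linearSubst_mem_homogeneousSubmodule A

@[simp]
lemma coe_linearSubstHomogeneous_apply (A : Matrix n n R) {d : ℕ}
    (p : homogeneousSubmodule n R d) :
    (linearSubstHomogeneous A d p : MvPolynomial n R) = linearSubst A p :=
  rfl

lemma linearSubstHomogeneous_mul (A B : Matrix n n R) (d : ℕ) :
    linearSubstHomogeneous (A * B) d = linearSubstHomogeneous B d * linearSubstHomogeneous A d :=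
  LinearMap.ext fun p => Subtype.ext (AlgHom.congr_fun (linearSubst_mul A B) p)

@[simp]
lemma linearSubstHomogeneous_one [DecidableEq n] (d : ℕ) :
    linearSubstHomogeneous (1 : Matrix n n R) d = 1 :=
  LinearMap.ext fun p => Subtype.ext (by simp)

end LinearSubst

section Trace

variable {n R : Type*} [Fintype n] [DecidableEq n] [CommRing R]

lemma trace_linearSubstHomogeneous_diagonal (μ : n → R) (d : ℕ) :
    LinearMap.trace R _ (linearSubstHomogeneous (diagonal μ) d) =
      ∑ k ∈ Finset.univ.finsuppAntidiag d, k.prod fun i e => μ i ^ e := by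
  set b := homogeneousMonomialBasis n R d
  have hb : ∀ k, linearSubstHomogeneous (diagonal μ) d (b k) =
      (k.1.prod fun i e => μ i ^ e) • b k :=
    fun k => Subtype.ext (by simp [b, linearSubst_diagonal_monomial, smul_monomial, mul_comm])
  rw [LinearMap.trace_eq_matrix_trace R b, Matrix.trace]
  simp only [diag_apply, LinearMap.toMatrix_apply, hb, map_smul, Basis.repr_self,
    Finsupp.smul_apply, Finsupp.single_eq_same, smul_eq_mul, mul_one]
  exact Finset.sum_coe_sort _ (fun k : n →₀ ℕ => k.prod fun i e => μ i ^ e)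

lemma trace_linearSubstHomogeneous_units_conj (P : (Matrix n n R)ˣ) (A : Matrix n n R) (d : ℕ) :
    LinearMap.trace R _
        (linearSubstHomogeneous ((P : Matrix n n R) * A * (↑P⁻¹ : Matrix n n R)) d) =
      LinearMap.trace R _ (linearSubstHomogeneous A d) := by
  rw [linearSubstHomogeneous_mul, linearSubstHomogeneous_mul, LinearMap.trace_mul_comm, mul_assoc,
    ← linearSubstHomogeneous_mul, Units.inv_mul, linearSubstHomogeneous_one, mul_one]

lemma charpolyRev_units_conj (P : (Matrix n n R)ˣ) (A : Matrix n n R) :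
    ((P : Matrix n n R) * A * (↑P⁻¹ : Matrix n n R)).charpolyRev = A.charpolyRev := by
  rw [← reverse_charpoly, coe_units_inv, charpoly_units_conj, reverse_charpoly]

lemma charpolyRev_diagonal (μ : n → R) :
    (diagonal μ).charpolyRev = ∏ i, (1 - Polynomial.C (μ i) * Polynomial.X) := by
  rw [charpolyRev, diagonal_map (map_zero _), ← diagonal_smul, ← diagonal_one, diagonal_sub,
    det_diagonal]
  simp only [Pi.smul_apply, smul_eq_mul, Polynomial.X_mul_C]

lemma mk_trace_linearSubstHomogeneous_diagonal_mul_charpolyRev (μ : n → R) :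
    PowerSeries.mk (fun d => LinearMap.trace R _ (linearSubstHomogeneous (diagonal μ) d)) *
      ((diagonal μ).charpolyRev : PowerSeries R) = 1 := by
  have hmk : PowerSeries.mk (fun d => LinearMap.trace R _ (linearSubstHomogeneous (diagonal μ) d)) =
      ∏ i, PowerSeries.mk (μ i ^ ·) := by
    ext d
    simp [PowerSeries.coeff_prod, trace_linearSubstHomogeneous_diagonal, Finsupp.prod_fintype]
  have hrev : ((diagonal μ).charpolyRev : PowerSeries R) =
      ∏ i, (1 - PowerSeries.C (μ i) * PowerSeries.X) := by
    rw [charpolyRev_diagonal, ← Polynomial.coeToPowerSeries.ringHom_apply, map_prod]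
    simp
  rw [hmk, hrev, ← Finset.prod_mul_distrib]
  simp [PowerSeries.mk_pow_mul_one_sub_C_mul_X]

end Trace

variable {n K : Type*} [Fintype n] [DecidableEq n] [Field K] [IsAlgClosed K]

lemma exists_units_conj_diagonal_of_pow_eq_one {A : Matrix n n K} {N : ℕ} (hA : A ^ N = 1)
    (hN : (N : K) ≠ 0) :
    ∃ (P : (Matrix n n K)ˣ) (μ : n → K), A = P * diagonal μ * (↑P⁻¹ : Matrix n n K) := by
  let f : Module.End K (n → K) := toLinAlgEquiv' A
  have hss : f.IsSemisimple :=
    Module.End.isSemisimple_of_pow_eq_one (by rw [← map_pow, hA, map_one]) hN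
  obtain ⟨b₀, μ₀, hb₀⟩ := Module.End.exists_basis_apply_eq_smul hss
  let c := Pi.basisFun K n
  let e := b₀.indexEquiv c
  let b := b₀.reindex e
  let μ := μ₀ ∘ e.symm
  have hb : ∀ i, f (b i) = μ i • b i := fun i => by simpa [b, μ] using hb₀ (e.symm i)
  have hdiag : LinearMap.toMatrix b b f = diagonal μ := by
    ext i j
    rw [LinearMap.toMatrix_apply, hb, map_smul, Basis.repr_self]
    by_cases hij : i = j <;> simp [hij]
  refine ⟨⟨c.toMatrix b, b.toMatrix c, c.toMatrix_mul_toMatrix_flip b,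
    b.toMatrix_mul_toMatrix_flip c⟩, μ, ?_⟩
  rw [← hdiag, Units.inv_mk, basis_toMatrix_mul_linearMap_toMatrix_mul_basis_toMatrix,
    LinearMap.toMatrix_eq_toMatrix']
  exact (LinearMap.toMatrix'_toLin' A).symm

lemma mk_trace_linearSubstHomogeneous_eq_inv_charpolyRev {A : Matrix n n K} {N : ℕ}
    (hA : A ^ N = 1) (hN : (N : K) ≠ 0) :
    PowerSeries.mk (fun d => LinearMap.trace K _ (linearSubstHomogeneous A d)) =
      (A.charpolyRev : PowerSeries K)⁻¹ := by
  obtain ⟨P, μ, rfl⟩ := exists_units_conj_diagonal_of_pow_eq_one hA hN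
  simp only [trace_linearSubstHomogeneous_units_conj, charpolyRev_units_conj]
  refine (PowerSeries.eq_inv_iff_mul_eq_one ?_).mpr
    (mk_trace_linearSubstHomogeneous_diagonal_mul_charpolyRev μ)
  simp [Polynomial.coeff_zero_eq_eval_zero]

end Matrix

namespace Representation

lemma map_subtype_invariants_subrepresentation {k G V : Type*} [CommRing k] [Group G]
    [AddCommGroup V] [Module k V] (τ : Representation k G V) (W : Submodule k V)
    (hW : ∀ g, W ≤ W.comap (τ g)) :
    (τ.subrepresentation W hW).invariants.map W.subtype = τ.invariants ⊓ W := by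
  ext v
  simp [mem_invariants, Subtype.ext_iff]

variable {k G V : Type*} [Field k] [Group G] [Fintype G] [AddCommGroup V] [Module k V]

lemma finrank_invariants_eq_inv_card_mul_sum_trace [FiniteDimensional k V]
    (τ : Representation k G V) (hG : (Fintype.card G : k) ≠ 0) :
    (finrank k τ.invariants : k) = (Fintype.card G : k)⁻¹ * ∑ g, LinearMap.trace k V (τ g) := by
  have := invertibleOfNonzero hG
  rw [← τ.isProj_averageMap.trace, averageMap, GroupAlgebra.average, map_smul, map_smul, map_sum,
    map_sum, smul_eq_mul, invOf_eq_inv]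
  simp

lemma finrank_invariants_inf_eq_inv_card_mul_sum_trace (τ : Representation k G V)
    (W : Submodule k V) [FiniteDimensional k W] (hW : ∀ g, W ≤ W.comap (τ g))
    (hG : (Fintype.card G : k) ≠ 0) :
    (finrank k ↥(τ.invariants ⊓ W) : k) =
      (Fintype.card G : k)⁻¹ * ∑ g, LinearMap.trace k W ((τ g).restrict (hW g)) := by
  rw [← map_subtype_invariants_subrepresentation τ W hW, Submodule.finrank_map_subtype_eq]
  exact (τ.subrepresentation W hW).finrank_invariants_eq_inv_card_mul_sum_trace hG

end Representation

open scoped MatrixGroups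

/-- Molien's formula: for a finite group `G` acting on `W = ℂ^m` via `ρ`, with the
induced action `σ` on the polynomial ring `ℂ[x_1,…,x_m] = Sym W^*` (where
`σ g` substitutes `x_i ↦ ∑_j (ρ g)⁻¹_{ij} x_j`), the Poincaré series
`∑_d dim (Sym^d W^*)^G t^d` of the invariants equals
`(1/|G|) ∑_{g ∈ G} 1 / det(1 - t ρ(g)⁻¹)`. -/
theorem molien_formula (G : Type*) [Group G] [Fintype G] (m : ℕ)
    (ρ : G →* Matrix.GeneralLinearGroup (Fin m) ℂ)
    (σ : Representation ℂ G (MvPolynomial (Fin m) ℂ))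
    (hσ : ∀ (g : G) (q : MvPolynomial (Fin m) ℂ),
      σ g q = MvPolynomial.aeval
        (fun i => ∑ j, ((((ρ g)⁻¹ : Matrix.GeneralLinearGroup (Fin m) ℂ) :
          Matrix (Fin m) (Fin m) ℂ) i j) • MvPolynomial.X j) q) :
    PowerSeries.mk (fun d => (Module.finrank ℂ
        ↥(σ.invariants ⊓ MvPolynomial.homogeneousSubmodule (Fin m) ℂ d) : ℂ)) =
      (Fintype.card G : ℂ)⁻¹ •
        ∑ g : G, ((Matrix.charpolyRev
          (((ρ g)⁻¹ : Matrix.GeneralLinearGroup (Fin m) ℂ) :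
            Matrix (Fin m) (Fin m) ℂ) : Polynomial ℂ) : PowerSeries ℂ)⁻¹ := by
  set A : G → Matrix (Fin m) (Fin m) ℂ := fun g => ((ρ g)⁻¹ : GL (Fin m) ℂ)
  have hσA : ∀ g, σ g = (Matrix.linearSubst (A g)).toLinearMap :=
    fun g => LinearMap.ext fun q => by rw [hσ, AlgHom.toLinearMap_apply, Matrix.linearSubst_apply]
  have hA : ∀ g, A g ^ Fintype.card G = 1 := fun g => by
    rw [← Units.val_pow_eq_pow_val, inv_pow, ← map_pow, pow_card_eq_one, map_one, inv_one,
      Units.val_one]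
  have hG : (Fintype.card G : ℂ) ≠ 0 := Nat.cast_ne_zero.mpr Fintype.card_ne_zero
  have hW : ∀ d g, homogeneousSubmodule (Fin m) ℂ d ≤
      (homogeneousSubmodule (Fin m) ℂ d).comap (σ g) := fun d g p hp => by
    rw [Submodule.mem_comap, hσA]
    exact Matrix.linearSubst_mem_homogeneousSubmodule _ hp
  ext d
  rw [PowerSeries.coeff_mk, σ.finrank_invariants_inf_eq_inv_card_mul_sum_trace _ (hW d) hG,
    map_smul, map_sum, smul_eq_mul]
  refine congrArg _ (Finset.sum_congr rfl fun g _ => ?_)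
  rw [← Matrix.mk_trace_linearSubstHomogeneous_eq_inv_charpolyRev (hA g) hG, PowerSeries.coeff_mk]
  exact congrArg _ (LinearMap.ext fun p => Subtype.ext (by simp [hσA]))
end
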